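/- The assignment (G',P',w') ↦ (PG', I'(w')) on objects and φ ↦ Pφ on morphisms defines a functor from the category DSN of dynamical systems on networks to the category DS of continuous-time dynamical systems, where DS has objects (M,X) with X a vector field on the manifold M and morphisms f : (M,X) → (N,Y) smooth maps with Df ∘ X = Y ∘ f. -/

import Mathlib

/-- A finite directed multigraph. -/
structure DGraph where
  V : Type
  E : Type
  [fV : Fintype V]
  [fE : Fintype E]
  [dV : DecidableEq V]
  [dE : DecidableEq E]
  s : E → V
  t : E → V

attribute [instance] DGraph.fV DGraph.fE DGraph.dV DGraph.dE

/-- A map of directed graphs. -/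
@[ext]
structure GraphHom (G G' : DGraph) where
  vmap : G.V → G'.V
  emap : G.E → G'.E
  src : ∀ e, vmap (G.s e) = G'.s (emap e)
  tgt : ∀ e, vmap (G.t e) = G'.t (emap e)

/-- Identity graph map. -/
def GraphHom.id (G : DGraph) : GraphHom G G :=
  ⟨fun a => a, fun e => e, fun _ => rfl, fun _ => rfl⟩

/-- Composition of graph maps. -/
def GraphHom.comp {G G' G'' : DGraph} (ψ : GraphHom G' G'') (φ : GraphHom G G') :
    GraphHom G G'' :=
  ⟨fun a => ψ.vmap (φ.vmap a), fun e => ψ.emap (φ.emap e),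
   fun e => (congrArg ψ.vmap (φ.src e)).trans (ψ.src _),
   fun e => (congrArg ψ.vmap (φ.tgt e)).trans (ψ.tgt _)⟩

/-- The map on total phase spaces induced by a graph map (`ℙφ`),
given a phase space function `P'` on the codomain graph; the phase space
function on the domain is `P' ∘ φ.vmap`. -/
def Pmap {G G' : DGraph} (P' : G'.V → Type _) (φ : GraphHom G G') :
    (∀ a' : G'.V, P' a') → ∀ a : G.V, P' (φ.vmap a) :=
  fun x a => x (φ.vmap a)

/-- The input tree `I(a)` of a vertex `a`: vertices are `a` (the `Sum.inl` vertex)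
together with the edges of `G` targeting `a`; edges are the pairs `(a, γ)` with
`t γ = a`, going from `γ` to `a`. -/
@[reducible] def DGraph.inputTree (G : DGraph) (a : G.V) : DGraph where
  V := Unit ⊕ {e : G.E // G.t e = a}
  E := {e : G.E // G.t e = a}
  s := fun e => Sum.inr e
  t := fun _ => Sum.inl ()

/-- The canonical graph map `ξ_a : I(a) → G`. -/
def DGraph.xi (G : DGraph) (a : G.V) : GraphHom (G.inputTree a) G where
  vmap := fun v => match v with
    | Sum.inl _ => a
    | Sum.inr e => G.s e.1
  emap := fun e => e.1
  src := fun _ => rfl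
  tgt := fun e => e.2.symm

/-- The graph with a single vertex and no edges. -/
def singleGraph : DGraph where
  V := Unit
  E := Empty
  s := Empty.elim
  t := Empty.elim

/-- The inclusion `ι_a : {a} → G`. -/
def DGraph.iota (G : DGraph) (a : G.V) : GraphHom singleGraph G :=
  ⟨fun _ => a, Empty.elim, fun e => e.elim, fun e => e.elim⟩

/-- The inclusion `j_a : {a} → I(a)`. -/
def DGraph.jmap (G : DGraph) (a : G.V) : GraphHom singleGraph (G.inputTree a) :=
  ⟨fun _ => Sum.inl (), Empty.elim, fun e => e.elim, fun e => e.elim⟩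

/-- The induced map of input trees `φ_a : I(a) → I(φ(a))`. -/
def GraphHom.inputHom {G G' : DGraph} (φ : GraphHom G G') (a : G.V) :
    GraphHom (G.inputTree a) (G'.inputTree (φ.vmap a)) where
  vmap := fun v => match v with
    | Sum.inl _ => Sum.inl ()
    | Sum.inr e => Sum.inr ⟨φ.emap e.1, by rw [← φ.tgt, e.2]⟩
  emap := fun e => ⟨φ.emap e.1, by rw [← φ.tgt, e.2]⟩
  src := fun _ => rfl
  tgt := fun _ => rfl

/-- A graph fibration: for every vertex `a` of `G` and every edge `e'` of `G'`
ending at `φ(a)` there is a unique edge `e` of `G` ending at `a` with `φ(e) = e'`. -/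
def IsFibration {G G' : DGraph} (φ : GraphHom G G') : Prop :=
  ∀ (a : G.V) (e' : G'.E), G'.t e' = φ.vmap a →
    ∃! e : G.E, G.t e = a ∧ φ.emap e = e'

/-- For a graph fibration, the inverse of the bijection `t⁻¹(a) → t⁻¹(φ(a))`. -/
noncomputable def fibSection {G G' : DGraph} {φ : GraphHom G G'} (hφ : IsFibration φ)
    (a : G.V) (e' : {e' : G'.E // G'.t e' = φ.vmap a}) : {e : G.E // G.t e = a} :=
  ⟨(hφ a e'.1 e'.2).exists.choose, (hφ a e'.1 e'.2).exists.choose_spec.1⟩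

theorem fibSection_spec {G G' : DGraph} {φ : GraphHom G G'} (hφ : IsFibration φ)
    (a : G.V) (e' : {e' : G'.E // G'.t e' = φ.vmap a}) :
    φ.emap (fibSection hφ a e').1 = e'.1 :=
  (hφ a e'.1 e'.2).exists.choose_spec.2

/-- The pullback of a tuple of open systems along a graph fibration:
`(φ*w')_a = w'_{φ(a)} ∘ (ℙφ_a)⁻¹`, written out explicitly using the inverse of the
input tree isomorphism `φ_a : I(a) ≅ I(φ(a))`. -/
noncomputable def pullbackCtrl {G G' : DGraph} {φ : GraphHom G G'} (hφ : IsFibration φ)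
    (M' : G'.V → Type _) (E' : G'.V → Type _)
    (w' : ∀ a' : G'.V, (∀ v : (G'.inputTree a').V, M' ((G'.xi a').vmap v)) → E' a')
    (a : G.V) (y : ∀ v : (G.inputTree a).V, M' (φ.vmap ((G.xi a).vmap v))) :
    E' (φ.vmap a) :=
  w' (φ.vmap a) (fun v => match v with
    | Sum.inl _ => y (Sum.inl ())
    | Sum.inr e' =>
        cast (congrArg M' ((φ.src _).trans (congrArg G'.s (fibSection_spec hφ a e'))))
          (y (Sum.inr (fibSection hφ a e'))))

open Manifold Topology

/-!
`ℙφ` only reindexes coordinates, `x' ↦ x' ∘ φ`. In product charts it is therefore the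
continuous linear map `v ↦ v ∘ φ`, which makes it smooth and equal to its own derivative, so
`D(ℙφ)(𝓘'(w')(x'))` has `a`-component `w'_{φ(a)}(x' ∘ ξ_{φ(a)})`. Since `φ` is a fibration,
the pullback `(φ*w')_a` feeds `w'_{φ(a)}` through the isomorphism `I(a) ≅ I(φ(a))`, and on the
state `x' ∘ φ` it reads exactly the coordinates `x' ∘ ξ_{φ(a)}`.
-/

section PiPrecomp

variable {𝕜 : Type*} [NontriviallyNormedField 𝕜] {ι κ : Type*} [Fintype ι] [Fintype κ]
  (r : κ → ι) {E : ι → Type*} [∀ i, NormedAddCommGroup (E i)] [∀ i, NormedSpace 𝕜 (E i)]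
  {H : ι → Type*} [∀ i, TopologicalSpace (H i)] (I : ∀ i, ModelWithCorners 𝕜 (E i) (H i))
  {M : ι → Type*} [∀ i, TopologicalSpace (M i)] [∀ i, ChartedSpace (H i) (M i)]

theorem extChartAt_pi_target (x : ∀ i, M i) :
    (extChartAt (ModelWithCorners.pi I) x).target =
      Set.univ.pi fun i => (extChartAt (I i) (x i)).target := by
  ext y
  simp only [extChartAt, OpenPartialHomeomorph.extend, piChartedSpace_chartAt,
    OpenPartialHomeomorph.pi_toPartialHomeomorph, ModelWithCorners.pi, PartialEquiv.trans_target,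
    PartialEquiv.pi_target, ModelWithCorners.target_eq, ModelWithCorners.toPartialEquiv_coe_symm,
    Set.mem_inter_iff, Set.mem_pi, Set.mem_univ, Set.mem_range, Set.mem_preimage, forall_const]
  exact ⟨fun h i => ⟨h.1 i, h.2 i trivial⟩, fun h => ⟨fun i => (h i).1, fun i _ => (h i).2⟩⟩

theorem writtenInExtChartAt_pi_precomp_eqOn (x : ∀ i, M i) :
    Set.EqOn
      (extChartAt (ModelWithCorners.pi fun k => I (r k)) (fun k => x (r k)) ∘
        (fun z k => z (r k)) ∘ (extChartAt (ModelWithCorners.pi I) x).symm)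
      (fun y k => y (r k)) (extChartAt (ModelWithCorners.pi I) x).target := by
  intro y hy
  rw [extChartAt_pi_target] at hy
  funext k
  exact (extChartAt (I (r k)) (x (r k))).right_inv (hy (r k) trivial)

theorem hasMFDerivAt_pi_precomp (x : ∀ i, M i) :
    HasMFDerivAt (ModelWithCorners.pi I) (ModelWithCorners.pi fun k => I (r k))
      (fun z k => z (r k)) x
      (ContinuousLinearMap.pi fun k => ContinuousLinearMap.proj (R := 𝕜) (r k)) := by
  refine ⟨(continuous_pi fun k => continuous_apply (r k)).continuousAt, ?_⟩
  exact (ContinuousLinearMap.pi fun k => ContinuousLinearMap.proj (R := 𝕜) (φ := E) (r k))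
    |>.hasFDerivAt.hasFDerivWithinAt.congr_of_eventuallyEq
      (Filter.eventuallyEq_of_mem (extChartAt_target_mem_nhdsWithin x)
        (writtenInExtChartAt_pi_precomp_eqOn r I x))
      (writtenInExtChartAt_pi_precomp_eqOn r I x (mem_extChartAt_target x))

theorem contMDiff_pi_precomp (n : WithTop ℕ∞) :
    ContMDiff (ModelWithCorners.pi I) (ModelWithCorners.pi fun k => I (r k)) n
      (fun (z : ∀ i, M i) k => z (r k)) := by
  intro x
  rw [contMDiffAt_iff]
  refine ⟨(continuous_pi fun k => continuous_apply (r k)).continuousAt, ?_⟩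
  exact (ContinuousLinearMap.pi fun k => ContinuousLinearMap.proj (R := 𝕜) (φ := E) (r k))
    |>.contDiff.contDiffWithinAt.congr_of_eventuallyEq
      (Filter.eventuallyEq_of_mem (extChartAt_target_mem_nhdsWithin x)
        (writtenInExtChartAt_pi_precomp_eqOn r I x))
      (writtenInExtChartAt_pi_precomp_eqOn r I x (mem_extChartAt_target x))

end PiPrecomp

theorem pullbackCtrl_Pmap {G G' : DGraph} {φ : GraphHom G G'} (hφ : IsFibration φ)
    (M' : G'.V → Type _) (E' : G'.V → Type _)
    (w' : ∀ a' : G'.V, (∀ v : (G'.inputTree a').V, M' ((G'.xi a').vmap v)) → E' a')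
    (x' : ∀ a', M' a') (a : G.V) :
    pullbackCtrl hφ M' E' w' a (Pmap (fun b => M' (φ.vmap b)) (G.xi a) (Pmap M' φ x')) =
      w' (φ.vmap a) (Pmap M' (G'.xi (φ.vmap a)) x') := by
  unfold pullbackCtrl
  congr 1
  funext v
  rcases v with ⟨⟩ | e'
  · rfl
  · exact eq_of_heq <| (cast_heq _ _).trans <|
      congr_arg_heq x' ((φ.src _).trans (congrArg G'.s (fibSection_spec hφ a e')))

theorem DSN_to_DS_functor_general {G G' G'' : DGraph} (φ : GraphHom G G')
    (hφ : IsFibration φ) (ψ : GraphHom G' G'')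
    (E' : G'.V → Type) [∀ a', NormedAddCommGroup (E' a')] [∀ a', NormedSpace ℝ (E' a')]
    (H' : G'.V → Type) [∀ a', TopologicalSpace (H' a')]
    (I' : ∀ a', ModelWithCorners ℝ (E' a') (H' a'))
    (M' : G'.V → Type) [∀ a', TopologicalSpace (M' a')] [∀ a', ChartedSpace (H' a') (M' a')]
    (P'' : G''.V → Type)
    (w' : ∀ a' : G'.V, (∀ v : (G'.inputTree a').V, M' ((G'.xi a').vmap v)) → E' a') :
    -- functoriality on identities and composites
    Pmap M' (GraphHom.id G') = id ∧
    Pmap P'' (ψ.comp φ) = (fun x => Pmap (fun a' => P'' (ψ.vmap a')) φ (Pmap P'' ψ x)) ∧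
    -- the image of a `DSN`-morphism is a morphism of dynamical systems:
    -- `ℙφ` is smooth and `D(ℙφ) ∘ 𝓘'(w') = 𝓘(φ*w') ∘ ℙφ`
    ContMDiff (ModelWithCorners.pi I') (ModelWithCorners.pi fun a => I' (φ.vmap a)) (⊤ : ℕ∞)
      (Pmap M' φ) ∧
    ∀ x' : ∀ a' : G'.V, M' a',
      mfderiv (ModelWithCorners.pi I') (ModelWithCorners.pi fun a => I' (φ.vmap a))
          (Pmap M' φ) x' (fun a' => w' a' (Pmap M' (G'.xi a') x')) =
        fun a : G.V => pullbackCtrl hφ M' E' w' a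
          (Pmap (fun b => M' (φ.vmap b)) (G.xi a) (Pmap M' φ x')) := by
  refine ⟨rfl, rfl, contMDiff_pi_precomp φ.vmap I' _, fun x' => ?_⟩
  have hderiv : HasMFDerivAt (ModelWithCorners.pi I') (ModelWithCorners.pi fun a => I' (φ.vmap a))
      (Pmap M' φ) x' (ContinuousLinearMap.pi fun a => ContinuousLinearMap.proj (φ.vmap a)) :=
    hasMFDerivAt_pi_precomp φ.vmap I' x'
  rw [hderiv.mfderiv]
  funext a
  exact (pullbackCtrl_Pmap hφ M' E' w' x' a).symm

/-- The assignment `(G',P',w') ↦ (ℙG', 𝓘'(w'))`, `φ ↦ ℙφ` defines a functor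
from the category `DSN` of dynamical systems on networks to the category `DS` of
continuous-time dynamical systems: it respects identities and composition
(`ℙ(id) = id`, `ℙ(ψ ∘ φ) = ℙφ ∘ ℙψ`), and every `DSN`-morphism — a network fibration `φ`
with `φ*w' = w` — is sent to a `DS`-morphism, i.e. a smooth map `ℙφ` with
`D(ℙφ) ∘ 𝓘'(w') = 𝓘(φ*w') ∘ ℙφ`. -/
theorem DSN_to_DS_functor {G G' G'' : DGraph} (φ : GraphHom G G')
    (hφ : IsFibration φ) (ψ : GraphHom G' G'')
    (E' : G'.V → Type) [∀ a', NormedAddCommGroup (E' a')] [∀ a', NormedSpace ℝ (E' a')]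
    (H' : G'.V → Type) [∀ a', TopologicalSpace (H' a')]
    (I' : ∀ a', ModelWithCorners ℝ (E' a') (H' a'))
    (M' : G'.V → Type) [∀ a', TopologicalSpace (M' a')] [∀ a', ChartedSpace (H' a') (M' a')]
    [∀ a', IsManifold (I' a') ((⊤ : ℕ∞) : WithTop ℕ∞) (M' a')]
    (P'' : G''.V → Type)
    (w' : ∀ a' : G'.V, (∀ v : (G'.inputTree a').V, M' ((G'.xi a').vmap v)) → E' a')
    (hw' : ∀ a' : G'.V, ContMDiff
        (ModelWithCorners.pi fun v : (G'.inputTree a').V => I' ((G'.xi a').vmap v))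
        (I' a').tangent (⊤ : ℕ∞)
        (fun y => (⟨y (Sum.inl ()), w' a' y⟩ : TangentBundle (I' a') (M' a')))) :
    -- functoriality on identities and composites
    Pmap M' (GraphHom.id G') = id ∧
    Pmap P'' (ψ.comp φ) = (fun x => Pmap (fun a' => P'' (ψ.vmap a')) φ (Pmap P'' ψ x)) ∧
    -- the image of a `DSN`-morphism is a morphism of dynamical systems:
    -- `ℙφ` is smooth and `D(ℙφ) ∘ 𝓘'(w') = 𝓘(φ*w') ∘ ℙφ`
    ContMDiff (ModelWithCorners.pi I') (ModelWithCorners.pi fun a => I' (φ.vmap a)) (⊤ : ℕ∞)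
      (Pmap M' φ) ∧
    ∀ x' : ∀ a' : G'.V, M' a',
      mfderiv (ModelWithCorners.pi I') (ModelWithCorners.pi fun a => I' (φ.vmap a))
          (Pmap M' φ) x' (fun a' => w' a' (Pmap M' (G'.xi a') x')) =
        fun a : G.V => pullbackCtrl hφ M' E' w' a
          (Pmap (fun b => M' (φ.vmap b)) (G.xi a) (Pmap M' φ x')) :=
  DSN_to_DS_functor_general φ hφ ψ E' H' I' M' P'' w'
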